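/- For every nonnegative integer n and every real x with 0 < x < 1, the series A_n(x) = Σ_{j=0}^∞ binom(n+j, j) · ((−1)^j (1/2)_j)/((2(n+j)+1)·j!) · x^j converges and A_n(x) = (1/(2·x^{n+1/2})) · ∫₀^x t^{n−1/2}·(1+t)^{−1/2} · F_n(t/(1+t)) dt, where F_n(y) = Σ_{m=0}^n ((−n)_m (1/2)_m / ((1)_m m!)) y^m. -/

import Mathlib

open Real Finset

/-- Pochhammer symbol `(a)_n = a (a+1) ⋯ (a+n-1)`. -/
noncomputable def poch (a : ℝ) (n : ℕ) : ℝ := ∏ i ∈ Finset.range n, (a + i)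

/-- Terminating Gauss hypergeometric function `₂F₁(-n, 1/2; 1; y)`. -/
noncomputable def F2F1 (n : ℕ) (y : ℝ) : ℝ :=
  ∑ m ∈ Finset.range (n + 1),
    poch (-(n : ℝ)) m * poch (1/2) m / (poch 1 m * (Nat.factorial m : ℝ)) * y ^ m

/-! Expanding each `(1 + t) ^ (-1/2 - m)` in `(1 + t) ^ (-1/2) F_n (t / (1 + t))` by the binomial
series and collecting powers of `t` with Vandermonde's identity gives the Pfaff-type expansion
`∑ⱼ C(n+j, j) C(-1/2, j) tʲ`, which converges absolutely on `(0, 1)`. Multiplying it by `t^(n-1/2)`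
and integrating term by term over `(0, x)` produces the series `A_n(x)`. -/

open Nat MeasureTheory

lemma poch_succ (a : ℝ) (k : ℕ) : poch a (k + 1) = poch a k * (a + k) :=
  prod_range_succ _ _

lemma poch_eq_ascPochhammer_eval (a : ℝ) (k : ℕ) : poch a k = (ascPochhammer ℝ k).eval a := by
  induction k with
  | zero => simp [poch]
  | succ k ih => rw [poch_succ, ascPochhammer_succ_eval, ih]

lemma Ring.choose_neg_eq_poch (s : ℝ) (k : ℕ) :
    Ring.choose (-s) k = (-1) ^ k * poch s k / k ! := by
  have h := Ring.factorial_nsmul_multichoose_eq_ascPochhammer s k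
  rw [Polynomial.ascPochhammer_smeval_eq_eval, ← poch_eq_ascPochhammer_eval, nsmul_eq_mul] at h
  rw [Ring.choose_neg', ← h, Units.smul_def, zsmul_eq_mul, Int.cast_negOnePow_natCast]
  field_simp

lemma poch_one (k : ℕ) : poch 1 k = k ! := by
  induction k with
  | zero => simp [poch]
  | succ k ih => rw [poch_succ, ih, factorial_succ]; push_cast; ring

lemma poch_neg_natCast (n k : ℕ) : poch (-n) k = (-1) ^ k * n.choose k * k ! := by
  have h := Ring.choose_neg_eq_poch (-n) k
  rw [neg_neg, Ring.choose_natCast] at h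
  rw [h]
  field_simp
  rw [← pow_mul, pow_mul', neg_one_sq, one_pow, mul_one]

lemma F2F1_eq_sum_choose_mul_ringChoose (n : ℕ) (y : ℝ) :
    F2F1 n y = ∑ m ∈ range (n + 1), (n.choose m : ℝ) * Ring.choose (-(1 / 2)) m * y ^ m := by
  refine sum_congr rfl fun m _ => ?_
  rw [poch_neg_natCast, poch_one, Ring.choose_neg_eq_poch]
  field_simp

lemma poch_nonneg {a : ℝ} (ha : 0 ≤ a) (k : ℕ) : 0 ≤ poch a k :=
  prod_nonneg fun _ _ => by positivity

lemma poch_le_poch {a b : ℝ} (ha : 0 ≤ a) (hab : a ≤ b) (k : ℕ) : poch a k ≤ poch b k :=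
  prod_le_prod (fun _ _ => by positivity) fun _ _ => by linarith

lemma abs_ringChoose_neg_half_le_one (k : ℕ) : |Ring.choose (-(1 / 2) : ℝ) k| ≤ 1 := by
  rw [Ring.choose_neg_eq_poch, abs_div, abs_mul, abs_pow, abs_neg, abs_one, one_pow, one_mul,
    abs_of_nonneg (poch_nonneg (by norm_num) k), Nat.abs_cast, div_le_one (by positivity),
    ← poch_one]
  exact poch_le_poch (by norm_num) (by norm_num) k

lemma Real.hasSum_ringChoose_mul_pow (a : ℝ) {t : ℝ} (ht : |t| < 1) :
    HasSum (fun k => Ring.choose a k * t ^ k) ((1 + t) ^ a) := by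
  have := Real.one_add_rpow_hasFPowerSeriesOnBall_zero (a := a) |>.hasSum (y := t)
    (by simpa [enorm_eq_nnnorm, ← NNReal.coe_lt_coe] using ht)
  simpa [binomialSeries, FormalMultilinearSeries.ofScalars_apply_eq, mul_comm] using this

lemma Nat.add_choose_eq_sum_choose_mul_choose (n j : ℕ) :
    (n + j).choose j = ∑ m ∈ range (n + 1), n.choose m * j.choose m := by
  have extend : ∀ k ≤ n + j, (n ≤ k ∨ j ≤ k) → ∑ m ∈ range (k + 1), n.choose m * j.choose m =
      ∑ m ∈ range (n + j + 1), n.choose m * j.choose m := fun k hkn hk =>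
    sum_subset (range_subset_range.2 (by omega)) fun m _ hm => by
      have : k < m := by simpa using hm
      rcases hk with hk | hk
      · rw [choose_eq_zero_of_lt (by omega : n < m), zero_mul]
      · rw [choose_eq_zero_of_lt (by omega : j < m), mul_zero]
  rw [add_choose_eq, sum_antidiagonal_eq_sum_range_succ_mk, extend n (by omega) (.inl le_rfl),
    ← extend j (by omega) (.inr le_rfl)]
  exact sum_congr rfl fun m hm => by rw [choose_symm (by simpa [Nat.lt_succ_iff] using hm)]

lemma hasSum_choose_mul_ringChoose_mul_pow (a : ℝ) (m : ℕ) {t : ℝ} (ht : |t| < 1) :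
    HasSum (fun j => (j.choose m : ℝ) * Ring.choose a j * t ^ j)
      (Ring.choose a m * t ^ m * (1 + t) ^ (a - m)) := by
  rw [← hasSum_nat_add_iff' m]
  have hzero : ∑ i ∈ range m, (i.choose m : ℝ) * Ring.choose a i * t ^ i = 0 :=
    sum_eq_zero fun i hi => by rw [choose_eq_zero_of_lt (mem_range.1 hi)]; simp
  rw [hzero, sub_zero]
  refine ((Real.hasSum_ringChoose_mul_pow (a - m) ht).mul_left (Ring.choose a m * t ^ m)).congr_fun
    fun k => ?_
  have h := Ring.choose_smul_choose a (Nat.le_add_left m k)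
  rw [nsmul_eq_mul, Nat.add_sub_cancel] at h
  rw [pow_add, h]
  ring

lemma hasSum_add_choose_mul_ringChoose_mul_pow (n : ℕ) (a : ℝ) {t : ℝ} (ht : |t| < 1) :
    HasSum (fun j => ((n + j).choose j : ℝ) * Ring.choose a j * t ^ j)
      ((1 + t) ^ a *
        ∑ m ∈ range (n + 1), (n.choose m : ℝ) * Ring.choose a m * (t / (1 + t)) ^ m) := by
  have h1t : 0 < 1 + t := by linarith [(abs_lt.1 ht).1]
  have hvalue : (1 + t) ^ a *
        ∑ m ∈ range (n + 1), (n.choose m : ℝ) * Ring.choose a m * (t / (1 + t)) ^ m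
      = ∑ m ∈ range (n + 1), (n.choose m : ℝ) * (Ring.choose a m * t ^ m * (1 + t) ^ (a - m)) := by
    rw [mul_sum]
    refine sum_congr rfl fun m _ => ?_
    rw [div_pow, rpow_sub h1t, rpow_natCast]
    field_simp
  rw [hvalue]
  refine (hasSum_sum fun m _ =>
    (hasSum_choose_mul_ringChoose_mul_pow a m ht).mul_left (n.choose m : ℝ)).congr_fun fun j => ?_
  rw [Nat.add_choose_eq_sum_choose_mul_choose]
  push_cast
  rw [sum_mul, sum_mul]
  exact sum_congr rfl fun m _ => by ring

lemma setIntegral_Ioc_rpow {r x : ℝ} (hr : -1 < r) (hx : 0 ≤ x) :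
    ∫ t in Set.Ioc 0 x, t ^ r = x ^ (r + 1) / (r + 1) := by
  rw [← intervalIntegral.integral_of_le hx, integral_rpow (.inl hr),
    zero_rpow (by linarith), sub_zero]

lemma hasSum_integral_rpow_mul {b : ℕ → ℝ} {f : ℝ → ℝ} {s x : ℝ} (hs : -1 < s) (hx : 0 < x)
    (hb : Summable fun j => |b j| * x ^ j)
    (hf : ∀ t ∈ Set.Ioc 0 x, HasSum (fun j => b j * t ^ j) (f t)) :
    HasSum (fun j => b j * (x ^ (s + j + 1) / (s + j + 1))) (∫ t in 0..x, t ^ s * f t) := by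
  have hexp : ∀ j : ℕ, -1 < s + j := fun j => by linarith [j.cast_nonneg (α := ℝ)]
  set F : ℕ → ℝ → ℝ := fun j t => b j * t ^ (s + j)
  have hF : ∀ j, ∀ t > 0, F j t = t ^ s * (b j * t ^ j) := fun j t ht => by
    simp only [F, rpow_add ht, rpow_natCast]; ring
  have hint : ∀ j, ∫ t in Set.Ioc 0 x, F j t = b j * (x ^ (s + j + 1) / (s + j + 1)) := fun j => by
    rw [integral_const_mul, setIntegral_Ioc_rpow (hexp j) hx.le]
  have hint_norm : ∀ j, ∫ t in Set.Ioc 0 x, ‖F j t‖ = |b j| * (x ^ (s + j + 1) / (s + j + 1)) :=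
    fun j => by
      rw [← setIntegral_Ioc_rpow (hexp j) hx.le, ← integral_const_mul]
      refine setIntegral_congr_fun measurableSet_Ioc fun t ht => ?_
      rw [norm_mul, Real.norm_eq_abs, Real.norm_of_nonneg (rpow_nonneg ht.1.le _)]
  have hsummable : Summable fun j => ∫ t in Set.Ioc 0 x, ‖F j t‖ := by
    refine (hb.mul_left (x ^ (s + 1) / (s + 1))).of_nonneg_of_le
      (fun j => integral_nonneg fun t => norm_nonneg _) fun j => ?_
    rw [hint_norm, add_right_comm, rpow_add hx, rpow_natCast]
    have : s + 1 ≤ s + 1 + j := by linarith [j.cast_nonneg (α := ℝ)]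
    calc |b j| * (x ^ (s + 1) * x ^ j / (s + 1 + j))
        ≤ |b j| * (x ^ (s + 1) * x ^ j / (s + 1)) := by
          gcongr
          · linarith
      _ = x ^ (s + 1) / (s + 1) * (|b j| * x ^ j) := by ring
  have hlimit : ∫ t in 0..x, t ^ s * f t = ∫ t in Set.Ioc 0 x, ∑' j, F j t := by
    rw [intervalIntegral.integral_of_le hx.le]
    refine setIntegral_congr_fun measurableSet_Ioc fun t ht => ?_
    rw [← ((hf t ht).mul_left (t ^ s)).tsum_eq]
    exact tsum_congr fun j => (hF j t ht.1).symm
  rw [hlimit]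
  exact (hasSum_integral_of_summable_integral_norm
    (fun j => ((intervalIntegral.intervalIntegrable_rpow' (hexp j)).const_mul (b j)).1)
    hsummable).congr_fun fun j => (hint j).symm

theorem stmt17 (n : ℕ) (x : ℝ) (hx0 : 0 < x) (hx1 : x < 1) :
    HasSum (fun j : ℕ =>
        (Nat.choose (n + j) j : ℝ) * ((-1 : ℝ) ^ j * poch (1/2) j) /
          ((2 * ((n : ℝ) + (j : ℝ)) + 1) * (Nat.factorial j : ℝ)) * x ^ j)
      (1 / (2 * x ^ ((n : ℝ) + 1/2)) *
        ∫ t in (0:ℝ)..x,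
          t ^ ((n : ℝ) - 1/2) * (1 + t) ^ (-(1:ℝ)/2) * F2F1 n (t / (1 + t))) := by
  set b : ℕ → ℝ := fun j => ((n + j).choose j : ℝ) * Ring.choose (-(1 / 2)) j
  have hb : Summable fun j => |b j| * x ^ j := by
    refine (summable_choose_mul_geometric_of_norm_lt_one n (r := x)
      (by rwa [norm_of_nonneg hx0.le])).of_nonneg_of_le (fun j => by positivity) fun j => ?_
    rw [add_comm j n, choose_symm_add, abs_mul, Nat.abs_cast]
    gcongr
    exact mul_le_of_le_one_right (by positivity) (abs_ringChoose_neg_half_le_one j)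
  have hf : ∀ t ∈ Set.Ioc 0 x,
      HasSum (fun j => b j * t ^ j) ((1 + t) ^ (-(1 : ℝ) / 2) * F2F1 n (t / (1 + t))) := by
    intro t ht
    rw [F2F1_eq_sum_choose_mul_ringChoose, neg_div]
    exact hasSum_add_choose_mul_ringChoose_mul_pow n _ (by rw [abs_of_pos ht.1]; linarith [ht.2])
  have hs : -1 < (n : ℝ) - 1 / 2 := by linarith [n.cast_nonneg (α := ℝ)]
  have h := (hasSum_integral_rpow_mul hs hx0 hb hf).mul_left (1 / (2 * x ^ ((n : ℝ) + 1 / 2)))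
  simp only [← mul_assoc] at h
  refine h.congr_fun fun j => ?_
  have hpow : x ^ ((n : ℝ) - 1 / 2 + j + 1) = x ^ ((n : ℝ) + 1 / 2) * x ^ j := by
    rw [← rpow_natCast, ← rpow_add hx0]; ring_nf
  have hdenom : (n : ℝ) - 1 / 2 + j + 1 = (2 * (n + j) + 1) / 2 := by ring
  rw [hpow, hdenom]
  simp only [b, Ring.choose_neg_eq_poch]
  have : 0 < x ^ ((n : ℝ) + 1 / 2) := by positivity
  field_simp
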